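/- Let σmax > 0, let S₁ be a nonzero complex number, let (Sₙ)_{n≥3} be complex numbers with 0 < Σ_{n≥3} |Sₙ|² < ∞, and let (fₙ)_{n≥3} be nonnegative reals such that the sequence (fₙ²·|Sₙ|²)_{n≥3} is summable. Define Ψ := |S₁| · √((σmax² + 2·σmax) / Σ_{n≥3} |Sₙ|²). If fₙ ≤ Ψ for every n ≥ 3, then (√(|S₁|² + Σ_{n≥3} fₙ²·|Sₙ|²) − |S₁|)/|S₁| ≤ σmax. -/
import Mathlib


/-- Theorem 1 of the paper: if the combined filter gains `fₙ` never exceed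
`Ψ = |S₁|·√((σmax² + 2σmax)/∑ₙ |Sₙ|²)`, then the robustness factor of the
filtered reset control system stays below `σmax`.  (Here `S k` denotes the
higher-order sensitivity `S_{k+3}` and `f k` the corresponding combined gain.) -/
theorem filter_gain_bound (σmax : ℝ) (hσ : 0 < σmax) (S₁ : ℂ) (hS1 : S₁ ≠ 0)
    (S : ℕ → ℂ) (hsum : Summable fun n => ‖S n‖ ^ 2)
    (hpos : 0 < ∑' n : ℕ, ‖S n‖ ^ 2)
    (f : ℕ → ℝ) (hf : ∀ n, 0 ≤ f n)
    (hsumf : Summable fun n => f n ^ 2 * ‖S n‖ ^ 2)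
    (hbound : ∀ n, f n ≤ ‖S₁‖ *
      Real.sqrt ((σmax ^ 2 + 2 * σmax) / ∑' n : ℕ, ‖S n‖ ^ 2)) :
    (Real.sqrt (‖S₁‖ ^ 2 + ∑' n : ℕ, f n ^ 2 * ‖S n‖ ^ 2) - ‖S₁‖) / ‖S₁‖ ≤ σmax := by
  set T := ∑' n : ℕ, ‖S n‖ ^ 2 with hT
  have hS1pos : 0 < ‖S₁‖ := norm_pos_iff.mpr hS1
  have hnonneg : 0 ≤ (σmax ^ 2 + 2 * σmax) / T :=
    div_nonneg (by positivity) hpos.le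
  set Ψ := ‖S₁‖ * Real.sqrt ((σmax ^ 2 + 2 * σmax) / T) with hΨ
  have hΨsq : Ψ ^ 2 = ‖S₁‖ ^ 2 * ((σmax ^ 2 + 2 * σmax) / T) := by
    rw [hΨ, mul_pow, Real.sq_sqrt hnonneg]
  -- termwise bound
  have hterm : ∀ n, f n ^ 2 * ‖S n‖ ^ 2 ≤ Ψ ^ 2 * ‖S n‖ ^ 2 := by
    intro n
    have h1 : f n ^ 2 ≤ Ψ ^ 2 := by
      have := hbound n
      nlinarith [hf n]
    nlinarith [sq_nonneg ‖S n‖]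
  have hsum_le : (∑' n : ℕ, f n ^ 2 * ‖S n‖ ^ 2) ≤ Ψ ^ 2 * T := by
    calc (∑' n : ℕ, f n ^ 2 * ‖S n‖ ^ 2) ≤ ∑' n : ℕ, Ψ ^ 2 * ‖S n‖ ^ 2 :=
          Summable.tsum_le_tsum hterm hsumf (hsum.mul_left _)
      _ = Ψ ^ 2 * T := by rw [tsum_mul_left]
  have hΨT : Ψ ^ 2 * T = ‖S₁‖ ^ 2 * (σmax ^ 2 + 2 * σmax) := by
    rw [hΨsq]; field_simp
  have key : Real.sqrt (‖S₁‖ ^ 2 + ∑' n : ℕ, f n ^ 2 * ‖S n‖ ^ 2) ≤ ‖S₁‖ * (1 + σmax) := by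
    have h2 : ‖S₁‖ ^ 2 + (∑' n : ℕ, f n ^ 2 * ‖S n‖ ^ 2) ≤ (‖S₁‖ * (1 + σmax)) ^ 2 := by
      have := hsum_le
      rw [hΨT] at this
      nlinarith
    calc Real.sqrt (‖S₁‖ ^ 2 + ∑' n : ℕ, f n ^ 2 * ‖S n‖ ^ 2)
        ≤ Real.sqrt ((‖S₁‖ * (1 + σmax)) ^ 2) := Real.sqrt_le_sqrt h2
      _ = ‖S₁‖ * (1 + σmax) := Real.sqrt_sq (by positivity)
  rw [div_le_iff₀ hS1pos]
  nlinarith [key]
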